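/- For all integers d ≥ 1 and k ≥ 0, and all real λ ≥ 0: Σ_{j=0}^{d} C(d,j) · 𝐀_{d+1,k,d−j+1} · λ^j = d! · (λ+1)^d · B_{d+1}(k + 1/(λ+1)), where B_{d+1} is the cardinal B-spline of order d+1. -/

import Mathlib

/-
Put `t = 1 / (λ + 1)`. After division by `(λ + 1) ^ d` the left side is the Bernstein polynomial
`P_{d,k}(t) = ∑ ν, 𝐀_{d+1,k,ν+1} b_{d,ν}(t)` and, for `0 < t ≤ 1`, the right side is the polynomial
`Q_{d,k}(t) = ∑ i ≤ k, (-1)^i C(d+1,i) (k - i + t)^d`, by the truncated-power formula for `B_{d+1}`.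
Inserting the last entry of a permutation gives
`𝐀_{d+2,k,j+2} - 𝐀_{d+2,k,j+1} = 𝐀_{d+1,k,j+1} - 𝐀_{d+1,k-1,j+1}` and
`𝐀_{d+2,k,d+2} = 𝐀_{d+2,k+1,1}`. Hence `P` and `Q` satisfy the same recursion
`∂ₜ F_{d+1,k} = (d+1) (F_{d,k} - F_{d,k-1})` and the same gluing condition
`F_{d,k+1}(0) = F_{d,k}(1)`, and both vanish for `k < 0`; so `P = Q` by induction on `d` and then
on `k`.
-/

open MeasureTheory Real Filter Finset

/-- The cardinal B-spline of order `d`: `B_1` is the indicator of `[0,1)`,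
and `B_d = B_1 * B_{d-1}` (convolution) for `d ≥ 2`. -/
noncomputable def Bspline : ℕ → ℝ → ℝ
  | 0, _ => 0
  | 1, x => if 0 ≤ x ∧ x < 1 then 1 else 0
  | (d + 2), x => ∫ y : ℝ, (if 0 ≤ x - y ∧ x - y < 1 then (1 : ℝ) else 0) * Bspline (d + 1) y

/-- Number of descents of a permutation `σ` of `{0, …, d-1}`: the number of
indices `i` with `i + 1 < d` and `σ (i+1) < σ i`. -/
def numDescents {d : ℕ} (σ : Equiv.Perm (Fin d)) : ℕ :=
  (Finset.univ.filter fun i : Fin d =>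
    (i : ℕ) + 1 < d ∧ σ ⟨((i : ℕ) + 1) % d, Nat.mod_lt _ i.pos⟩ < σ i).card

/-- Refined Eulerian number `𝐀_{d,k,j}`: the number of permutations of `{1, …, d}` with
exactly `k` descents and last entry equal to `j`. -/
def refinedEulerian (d : ℕ) (k : ℤ) (j : ℕ) : ℕ :=
  if h : 0 < d then
    (Finset.univ.filter fun σ : Equiv.Perm (Fin d) =>
      (numDescents σ : ℤ) = k ∧ ((σ ⟨d - 1, Nat.sub_lt h one_pos⟩ : ℕ) + 1 = j)).card
  else 0

theorem sum_range_alternating_choose_succ {R : Type*} [CommRing R] (n : ℕ) (g : ℕ → R) :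
    ∑ i ∈ range (n + 2), (-1) ^ i * ((n + 1).choose i : R) * g i =
      ∑ i ∈ range (n + 1), (-1) ^ i * (n.choose i : R) * (g i - g (i + 1)) := by
  have hlast : ∑ i ∈ range (n + 2), (-1) ^ i * (n.choose i : R) * g i =
      ∑ i ∈ range (n + 1), (-1) ^ i * (n.choose i : R) * g i := by
    simp [sum_range_succ _ (n + 1)]
  simp only [mul_sub, sum_sub_distrib]
  rw [← hlast, sum_range_succ' _ (n + 1), sum_range_succ' _ (n + 1), add_sub_right_comm,
    ← sum_sub_distrib]
  simp only [Nat.choose_succ_succ, Nat.cast_add, Nat.choose_zero_right]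
  congr 1
  exact sum_congr rfl fun i _ => by ring

/-- `truncPow 0 0 = 1`: then the right derivative of `truncPow (n + 1)` is `(n + 1) * truncPow n`
also for `n = 0`, and `B_1` is the first backward difference of `truncPow 0`. -/
noncomputable def truncPow (n : ℕ) (y : ℝ) : ℝ := if 0 ≤ y then y ^ n else 0

theorem continuous_truncPow_succ (n : ℕ) : Continuous (truncPow (n + 1)) := by
  have hmax : truncPow (n + 1) = fun y => max y 0 ^ (n + 1) := funext fun y => by
    unfold truncPow
    split_ifs with hy
    · rw [max_eq_left hy]
    · rw [max_eq_right (by linarith), zero_pow n.succ_ne_zero]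
  rw [hmax]
  fun_prop

theorem hasDerivWithinAt_truncPow_succ_sub (n : ℕ) (c x : ℝ) :
    HasDerivWithinAt (fun y => truncPow (n + 1) (y - c)) ((n + 1) * truncPow n (x - c))
      (Set.Ici x) x := by
  rcases lt_or_ge (x - c) 0 with hx | hx
  · have hzero : (fun y => truncPow (n + 1) (y - c)) =ᶠ[nhds x] fun _ => 0 := by
      filter_upwards [Iio_mem_nhds (sub_neg.1 hx)] with y hy
      exact if_neg (by simp only [Set.mem_Iio] at hy; linarith)
    simpa [truncPow, not_le.2 hx] using
      ((hasDerivAt_const x (0 : ℝ)).congr_of_eventuallyEq hzero).hasDerivWithinAt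
  · have hpow := (((hasDerivAt_id x).sub_const c).pow (n + 1)).hasDerivWithinAt (s := Set.Ici x)
    refine (hpow.congr (f₁ := fun y => truncPow (n + 1) (y - c)) (fun y hy => ?_) ?_).congr_deriv ?_
    · have : 0 ≤ y - c := by simp only [Set.mem_Ici] at hy; linarith
      simp [truncPow, this]
    all_goals simp [truncPow, hx]

theorem intervalIntegrable_truncPow_sub (n : ℕ) (c a b : ℝ) :
    IntervalIntegrable (fun y => truncPow n (y - c)) volume a b := by
  have : (fun y => truncPow n (y - c)) = (Set.Ici c).indicator (fun y => (y - c) ^ n) := by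
    ext y; simp [truncPow, Set.indicator_apply]
  rw [this, intervalIntegrable_iff]
  exact (Continuous.integrableOn_uIoc (by fun_prop)).indicator measurableSet_Ici

noncomputable def truncPowDiff (m n : ℕ) (x : ℝ) : ℝ :=
  ∑ i ∈ range (m + 1), (-1) ^ i * (m.choose i : ℝ) * truncPow n (x - i)

theorem hasDerivWithinAt_truncPowDiff (m n : ℕ) (x : ℝ) :
    HasDerivWithinAt (truncPowDiff m (n + 1)) ((n + 1) * truncPowDiff m n x) (Set.Ici x) x := by
  unfold truncPowDiff
  rw [mul_sum]
  refine HasDerivWithinAt.fun_sum fun i _ => ?_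
  exact ((hasDerivWithinAt_truncPow_succ_sub n i x).const_mul _).congr_deriv (by ring)

theorem continuous_truncPowDiff (m n : ℕ) : Continuous (truncPowDiff m (n + 1)) := by
  unfold truncPowDiff
  have := continuous_truncPow_succ n
  fun_prop

theorem intervalIntegrable_truncPowDiff (m n : ℕ) (a b : ℝ) :
    IntervalIntegrable (truncPowDiff m n) volume a b := by
  unfold truncPowDiff
  simpa only [Finset.sum_fn] using IntervalIntegrable.sum (range (m + 1))
    fun i _ => (intervalIntegrable_truncPow_sub n i a b).const_mul ((-1) ^ i * (m.choose i : ℝ))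

theorem truncPowDiff_sub (m n : ℕ) (x : ℝ) :
    truncPowDiff m n x - truncPowDiff m n (x - 1) = truncPowDiff (m + 1) n x := by
  unfold truncPowDiff
  rw [sum_range_alternating_choose_succ, ← sum_sub_distrib]
  refine sum_congr rfl fun i _ => ?_
  rw [Nat.cast_add_one, sub_sub x 1, add_comm (1 : ℝ), mul_sub]

theorem Bspline_succ_succ (n : ℕ) (x : ℝ) :
    Bspline (n + 2) x = ∫ y in x - 1..x, Bspline (n + 1) y := by
  rw [intervalIntegral.integral_of_le (by linarith), ← integral_indicator measurableSet_Ioc,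
    Bspline]
  congr 1 with y
  have hmem : (0 ≤ x - y ∧ x - y < 1) ↔ y ∈ Set.Ioc (x - 1) x := by
    rw [Set.mem_Ioc]; constructor <;> rintro ⟨h₁, h₂⟩ <;> constructor <;> linarith
  rw [Set.indicator_apply, if_congr hmem rfl rfl, ite_mul, one_mul, zero_mul]

theorem Bspline_one (x : ℝ) : Bspline 1 x = truncPow 0 x - truncPow 0 (x - 1) := by
  simp only [Bspline, truncPow]
  split_ifs <;> grind

theorem Bspline_succ_eq_truncPowDiff (n : ℕ) (x : ℝ) :
    Bspline (n + 1) x = truncPowDiff (n + 1) n x / n.factorial := by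
  induction n generalizing x with
  | zero => simp [Bspline_one, truncPowDiff, sum_range_succ, sub_eq_add_neg]
  | succ n ih =>
    have hFTC : ∫ y in x - 1..x, (n + 1) * truncPowDiff (n + 1) n y =
        truncPowDiff (n + 1) (n + 1) x - truncPowDiff (n + 1) (n + 1) (x - 1) :=
      intervalIntegral.integral_eq_sub_of_hasDeriv_right_of_le (by linarith)
        (continuous_truncPowDiff _ _).continuousOn
        (fun y _ => (hasDerivWithinAt_truncPowDiff _ n y).mono Set.Ioi_subset_Ici_self)
        ((intervalIntegrable_truncPowDiff _ _ _ _).const_mul _)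
    rw [Bspline_succ_succ]
    simp_rw [ih]
    rw [← truncPowDiff_sub, ← hFTC, intervalIntegral.integral_div,
      intervalIntegral.integral_const_mul, Nat.factorial_succ]
    push_cast
    field_simp

theorem numDescents_eq_sum {n : ℕ} (σ : Equiv.Perm (Fin (n + 1))) :
    numDescents σ = ∑ i : Fin n, if σ i.succ < σ i.castSucc then 1 else 0 := by
  rw [numDescents, card_filter, Fin.sum_univ_castSucc]
  simp only [Fin.val_last, lt_self_iff_false, false_and, if_false, add_zero]
  refine sum_congr rfl fun i _ => ?_
  have hsucc : (⟨((i.castSucc : ℕ) + 1) % (n + 1), Nat.mod_lt _ i.castSucc.pos⟩ : Fin (n + 1)) =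
      i.succ := Fin.ext (Nat.mod_eq_of_lt (by simp))
  rw [hsucc]
  simp

theorem Equiv.optionCongr_removeNone {α β : Type*} {e : Option α ≃ Option β} (h : e none = none) :
    Equiv.optionCongr (Equiv.removeNone e) = e := by
  ext (_ | a) : 1
  · simp [h]
  · obtain ⟨b, hb⟩ := Option.ne_none_iff_exists'.1 fun ha =>
      Option.some_ne_none a (e.injective (ha.trans h.symm))
    simp [← Equiv.removeNone_some e ⟨b, hb⟩]

/-- The permutation of `Fin (n + 1)` ending in `j` whose first `n` values are those of `p`,
relabelled increasingly into `Fin (n + 1) \ {j}`. -/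
def permWithLast {n : ℕ} (j : Fin (n + 1)) (p : Equiv.Perm (Fin n)) : Equiv.Perm (Fin (n + 1)) :=
  (finSuccEquivLast.trans (Equiv.optionCongr p)).trans (finSuccEquiv' j).symm

@[simp]
theorem permWithLast_castSucc {n : ℕ} (j : Fin (n + 1)) (p : Equiv.Perm (Fin n)) (i : Fin n) :
    permWithLast j p i.castSucc = j.succAbove (p i) := by
  simp [permWithLast]

@[simp]
theorem permWithLast_last {n : ℕ} (j : Fin (n + 1)) (p : Equiv.Perm (Fin n)) :
    permWithLast j p (Fin.last n) = j := by
  simp [permWithLast]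

theorem permWithLast_injective {n : ℕ} (j : Fin (n + 1)) : Function.Injective (permWithLast j) :=
  fun p q h => Equiv.ext fun i =>
    Fin.succAbove_right_injective (p := j) (by simpa using congrArg (· i.castSucc) h)

theorem exists_permWithLast_eq {n : ℕ} (σ : Equiv.Perm (Fin (n + 1))) :
    ∃ p, permWithLast (σ (Fin.last n)) p = σ := by
  set τ := (finSuccEquivLast.symm.trans σ).trans (finSuccEquiv' (σ (Fin.last n)))
  refine ⟨Equiv.removeNone τ, ?_⟩
  have hτ : τ none = none := by simp [τ]
  ext x
  simp [permWithLast, Equiv.optionCongr_removeNone hτ, τ]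

theorem numDescents_permWithLast {n : ℕ} (j : Fin (n + 2)) (p : Equiv.Perm (Fin (n + 1))) :
    numDescents (permWithLast j p) =
      numDescents p + if (j : ℕ) ≤ p (Fin.last n) then 1 else 0 := by
  rw [numDescents_eq_sum, numDescents_eq_sum, Fin.sum_univ_castSucc, Fin.succ_last,
    permWithLast_last]
  congr 1
  · refine sum_congr rfl fun i _ => ?_
    simp only [Fin.succ_castSucc, permWithLast_castSucc, Fin.succAbove_lt_succAbove_iff]
  · simp [Fin.lt_succAbove_iff_le_castSucc, Fin.le_iff_val_le_val]

theorem refinedEulerian_succ (n : ℕ) (k : ℤ) (j : Fin (n + 1)) :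
    refinedEulerian (n + 1) k (j + 1) =
      #{σ : Equiv.Perm (Fin (n + 1)) | numDescents σ = k ∧ σ (Fin.last n) = j} := by
  rw [refinedEulerian, dif_pos n.succ_pos]
  congr 1
  refine filter_congr fun σ _ => ?_
  simp [Fin.ext_iff, Fin.last]

theorem card_filter_numDescents_eq_last_eq (n : ℕ) (k : ℤ) (j : Fin (n + 2)) :
    #{σ : Equiv.Perm (Fin (n + 2)) | numDescents σ = k ∧ σ (Fin.last (n + 1)) = j} =
      #{p : Equiv.Perm (Fin (n + 1)) |
        ((numDescents p + if (j : ℕ) ≤ p (Fin.last n) then 1 else 0 : ℕ) : ℤ) = k} := by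
  symm
  refine card_bij (fun p _ => permWithLast j p) (fun p hp => ?_)
    (fun p _ q _ h => permWithLast_injective j h) (fun σ hσ => ?_)
  · simpa [numDescents_permWithLast] using hp
  · obtain ⟨p, hp⟩ := exists_permWithLast_eq σ
    simp only [mem_filter, mem_univ, true_and] at hσ
    rw [hσ.2] at hp
    exact ⟨p, by simpa [← numDescents_permWithLast, hp] using hσ.1, hp⟩

theorem refinedEulerian_succ_succ (n : ℕ) (k : ℤ) (j : Fin (n + 2)) :
    refinedEulerian (n + 2) k (j + 1) =
      ∑ v : Fin (n + 1), refinedEulerian (n + 1) (if (j : ℕ) ≤ v then k - 1 else k) (v + 1) := by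
  simp_rw [refinedEulerian_succ, card_filter_numDescents_eq_last_eq]
  rw [card_eq_sum_card_fiberwise (f := fun p => p (Fin.last n)) (t := univ)
    (fun _ _ => mem_univ _)]
  refine sum_congr rfl fun v _ => ?_
  rw [filter_filter]
  congr 1
  refine filter_congr fun p _ => ?_
  constructor <;> rintro ⟨h₁, h₂⟩ <;> subst h₂ <;> refine ⟨?_, rfl⟩ <;> split_ifs at * <;> omega

theorem refinedEulerian_of_neg (d : ℕ) {k : ℤ} (hk : k < 0) (j : ℕ) :
    refinedEulerian d k j = 0 := by
  unfold refinedEulerian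
  split_ifs
  · exact card_eq_zero.2 (filter_eq_empty_iff.2 fun σ _ h => by omega)
  · rfl

theorem refinedEulerian_one_one (k : ℤ) : refinedEulerian 1 k 1 = if k = 0 then 1 else 0 := by
  rw [show 1 = ((0 : Fin 1) : ℕ) + 1 from rfl, refinedEulerian_succ]
  rcases eq_or_ne k 0 with rfl | hk
  · simp [numDescents_eq_sum, Subsingleton.elim _ (0 : Fin 1)]
  · simp [numDescents_eq_sum, hk.symm, hk]

theorem refinedEulerian_succ_sub (n : ℕ) (k : ℤ) {j : ℕ} (hj : j ≤ n) :
    (refinedEulerian (n + 2) k (j + 2) : ℤ) - refinedEulerian (n + 2) k (j + 1) =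
      (refinedEulerian (n + 1) k (j + 1) : ℤ) - refinedEulerian (n + 1) (k - 1) (j + 1) := by
  have h₁ := refinedEulerian_succ_succ n k ⟨j + 1, by omega⟩
  have h₂ := refinedEulerian_succ_succ n k ⟨j, by omega⟩
  simp only at h₁ h₂
  rw [h₁, h₂]
  push_cast
  rw [← sum_sub_distrib, Fintype.sum_eq_single ⟨j, by omega⟩]
  · simp
  · intro v hv
    have hvj : (v : ℕ) ≠ j := fun h => hv (Fin.ext h)
    rw [if_congr (show j + 1 ≤ (v : ℕ) ↔ j ≤ v by omega) rfl rfl, sub_self]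

theorem refinedEulerian_last_eq (n : ℕ) (k : ℤ) :
    refinedEulerian (n + 2) k (n + 2) = refinedEulerian (n + 2) (k + 1) 1 := by
  have h₁ := refinedEulerian_succ_succ n k (Fin.last (n + 1))
  have h₂ := refinedEulerian_succ_succ n (k + 1) 0
  simp only [Fin.val_last, Fin.val_zero, zero_add, zero_le, if_true, add_sub_cancel_right] at h₁ h₂
  rw [h₁, h₂]
  exact sum_congr rfl fun v _ => by rw [if_neg (by omega)]

open Polynomial

theorem Polynomial.eq_of_derivative_eq_of_eval_zero_eq {R : Type*} [Ring R] [IsAddTorsionFree R]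
    {p q : R[X]} (hd : derivative p = derivative q) (h0 : p.eval 0 = q.eval 0) : p = q := by
  rw [← sub_eq_zero, ← derivative_sub] at hd
  rw [← sub_eq_zero, eq_C_of_derivative_eq_zero hd, coeff_zero_eq_eval_zero, eval_sub, h0,
    sub_self, C_0]

theorem derivative_sum_smul_bernsteinPolynomial {R : Type*} [CommRing R] (n : ℕ) (a : ℕ → R) :
    derivative (∑ ν ∈ range (n + 2), a ν • bernsteinPolynomial R (n + 1) ν) =
      (n + 1) * ∑ ν ∈ range (n + 1), (a (ν + 1) - a ν) • bernsteinPolynomial R n ν := by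
  have htel : ∑ ν ∈ range (n + 1), a (ν + 1) • bernsteinPolynomial R n (ν + 1) +
      a 0 • bernsteinPolynomial R n 0 = ∑ ν ∈ range (n + 1), a ν • bernsteinPolynomial R n ν := by
    rw [← sum_range_succ' (fun ν => a ν • bernsteinPolynomial R n ν), sum_range_succ,
      bernsteinPolynomial.eq_zero_of_lt R (lt_add_one n), smul_zero, add_zero]
  rw [derivative_sum, sum_range_succ']
  simp only [derivative_smul, bernsteinPolynomial.derivative_succ_aux,
    bernsteinPolynomial.derivative_zero, Nat.add_sub_cancel, ← mul_smul_comm, smul_sub, sub_smul,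
    sum_sub_distrib, ← mul_sum, neg_mul, smul_neg, Nat.cast_add_one]
  linear_combination (-(n : R[X]) - 1) * htel

theorem eval_inv_add_one_bernsteinPolynomial {K : Type*} [Field K] {n ν : ℕ} (hν : ν ≤ n) {c : K}
    (hc : c + 1 ≠ 0) :
    (c + 1) ^ n * (bernsteinPolynomial K n ν).eval (1 / (c + 1)) = n.choose ν * c ^ (n - ν) := by
  have hsplit : (c + 1) ^ n = (c + 1) ^ ν * (c + 1) ^ (n - ν) := by
    rw [← pow_add, Nat.add_sub_cancel' hν]
  have hsub : 1 - 1 / (c + 1) = c / (c + 1) := by field_simp; ring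
  simp only [bernsteinPolynomial, eval_mul, eval_pow, eval_natCast, eval_X, eval_sub, eval_one,
    hsub, hsplit, div_pow, one_pow]
  field_simp

/-- The piece of `t ↦ truncPow d (m + t)` on `0 < t ≤ 1` (for `d ≥ 1`). -/
noncomputable def shiftedPow (d : ℕ) (m : ℤ) : ℝ[X] := if 0 ≤ m then (X + C (m : ℝ)) ^ d else 0

theorem derivative_shiftedPow_succ (n : ℕ) (m : ℤ) :
    derivative (shiftedPow (n + 1) m) = (n + 1) * shiftedPow n m := by
  unfold shiftedPow
  split_ifs
  · rw [derivative_X_add_C_pow, Nat.add_sub_cancel, map_natCast, Nat.cast_add_one]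
  · simp

theorem eval_shiftedPow {d : ℕ} (hd : 1 ≤ d) (m : ℤ) {t : ℝ} (ht₀ : 0 < t) (ht₁ : t ≤ 1) :
    (shiftedPow d m).eval t = truncPow d (m + t) := by
  unfold shiftedPow truncPow
  rcases le_or_gt 0 m with hm | hm
  · have hm' : (0 : ℝ) ≤ m := by exact_mod_cast hm
    rw [if_pos hm, if_pos (by linarith)]
    simp [add_comm]
  · have hm' : (m : ℝ) ≤ -1 := by exact_mod_cast (show m ≤ -1 by omega)
    rcases (show m + t ≤ 0 by linarith).lt_or_eq with h | h
    · simp [not_le.2 hm, not_le.2 h]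
    · simp [not_le.2 hm, h, zero_pow (by omega : d ≠ 0)]

theorem eval_zero_shiftedPow_add_one {d : ℕ} (hd : 1 ≤ d) (m : ℤ) :
    (shiftedPow d (m + 1)).eval 0 = (shiftedPow d m).eval 1 := by
  unfold shiftedPow
  rcases lt_trichotomy m (-1) with hm | rfl | hm
  · simp [show ¬ 0 ≤ m + 1 by omega, show ¬ 0 ≤ m by omega]
  · simp [zero_pow (by omega : d ≠ 0)]
  · simp [show 0 ≤ m + 1 by omega, show 0 ≤ m by omega, add_comm]

/-- The polynomial `t ↦ d! B_{d+1}(k + t)` on `0 < t ≤ 1` (for `d ≥ 1`). -/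
noncomputable def splinePiece (d : ℕ) (k : ℤ) : ℝ[X] :=
  ∑ i ∈ range (d + 2), (-1) ^ i * ((d + 1).choose i : ℝ[X]) * shiftedPow d (k - i)

theorem derivative_splinePiece_succ (n : ℕ) (k : ℤ) :
    derivative (splinePiece (n + 1) k) = (n + 1) * (splinePiece n k - splinePiece n (k - 1)) := by
  unfold splinePiece
  simp only [derivative_sum, derivative_mul, derivative_pow, derivative_neg, derivative_one,
    derivative_natCast, neg_zero, mul_zero, zero_mul, zero_add, derivative_shiftedPow_succ]
  have hshift : ∀ i : ℕ, k - 1 - i = k - ((i + 1 : ℕ) : ℤ) := fun i => by push_cast; ring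
  simp_rw [← sum_sub_distrib, hshift, ← mul_sub,
    ← sum_range_alternating_choose_succ (n + 1) (fun i => shiftedPow n (k - i)), mul_sum]
  exact sum_congr rfl fun i _ => by ring

theorem splinePiece_of_neg (d : ℕ) {k : ℤ} (hk : k < 0) : splinePiece d k = 0 :=
  sum_eq_zero fun i _ => by simp only [shiftedPow, if_neg (show ¬ 0 ≤ k - i by omega), mul_zero]

theorem splinePiece_zero (k : ℤ) : splinePiece 0 k = if k = 0 then 1 else 0 := by
  simp only [splinePiece, shiftedPow, sum_range_succ, sum_range_zero]
  split_ifs <;> first | omega | simp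

theorem eval_zero_splinePiece_add_one {d : ℕ} (hd : 1 ≤ d) (k : ℤ) :
    (splinePiece d (k + 1)).eval 0 = (splinePiece d k).eval 1 := by
  simp only [splinePiece, eval_finsetSum, eval_mul, eval_pow, eval_neg, eval_one, eval_natCast,
    add_sub_right_comm k 1, eval_zero_shiftedPow_add_one hd]

theorem eval_splinePiece {d : ℕ} (hd : 1 ≤ d) (k : ℤ) {t : ℝ} (ht₀ : 0 < t) (ht₁ : t ≤ 1) :
    (splinePiece d k).eval t = truncPowDiff (d + 1) d (k + t) := by
  simp only [splinePiece, truncPowDiff, eval_finsetSum, eval_mul, eval_pow, eval_neg, eval_one,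
    eval_natCast, eval_shiftedPow hd _ ht₀ ht₁]
  push_cast
  simp only [sub_add_eq_add_sub]
noncomputable def eulerianBernstein (d : ℕ) (k : ℤ) : ℝ[X] :=
  ∑ ν ∈ range (d + 1), (refinedEulerian (d + 1) k (ν + 1) : ℝ) • bernsteinPolynomial ℝ d ν

theorem derivative_eulerianBernstein_succ (n : ℕ) (k : ℤ) :
    derivative (eulerianBernstein (n + 1) k) =
      (n + 1) * (eulerianBernstein n k - eulerianBernstein n (k - 1)) := by
  rw [eulerianBernstein, derivative_sum_smul_bernsteinPolynomial, eulerianBernstein,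
    eulerianBernstein, ← sum_sub_distrib]
  congr 1
  refine sum_congr rfl fun ν hν => ?_
  rw [← sub_smul]
  congr 1
  exact_mod_cast refinedEulerian_succ_sub n k (mem_range_succ_iff.1 hν)

theorem eulerianBernstein_of_neg (d : ℕ) {k : ℤ} (hk : k < 0) : eulerianBernstein d k = 0 :=
  sum_eq_zero fun ν _ => by rw [refinedEulerian_of_neg _ hk, Nat.cast_zero, zero_smul]

theorem eulerianBernstein_zero (k : ℤ) : eulerianBernstein 0 k = if k = 0 then 1 else 0 := by
  simp [eulerianBernstein, refinedEulerian_one_one, bernsteinPolynomial, apply_ite]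

theorem eval_zero_eulerianBernstein (d : ℕ) (k : ℤ) :
    (eulerianBernstein d k).eval 0 = refinedEulerian (d + 1) k 1 := by
  simp [eulerianBernstein, eval_finsetSum, bernsteinPolynomial.eval_at_0]

theorem eval_one_eulerianBernstein (d : ℕ) (k : ℤ) :
    (eulerianBernstein d k).eval 1 = refinedEulerian (d + 1) k (d + 1) := by
  simp [eulerianBernstein, eval_finsetSum, bernsteinPolynomial.eval_at_1]

theorem eulerianBernstein_eq_splinePiece (d : ℕ) (k : ℤ) :
    eulerianBernstein d k = splinePiece d k := by
  induction d generalizing k with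
  | zero => rw [eulerianBernstein_zero, splinePiece_zero]
  | succ n ih =>
    obtain hk | hk := lt_or_ge k (-1)
    · rw [eulerianBernstein_of_neg _ (by omega), splinePiece_of_neg _ (by omega)]
    induction k, hk using Int.leInduction with
    | base => rw [eulerianBernstein_of_neg _ (by omega), splinePiece_of_neg _ (by omega)]
    | succ k _ ihk =>
      refine eq_of_derivative_eq_of_eval_zero_eq ?_ ?_
      · rw [derivative_eulerianBernstein_succ, derivative_splinePiece_succ, ih, ih]
      · rw [eval_zero_eulerianBernstein, ← refinedEulerian_last_eq, ← eval_one_eulerianBernstein,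
          ihk, eval_zero_splinePiece_add_one (by omega)]

theorem sum_choose_refinedEulerian_mul_pow (d : ℕ) (k : ℤ) {c : ℝ} (hc : c + 1 ≠ 0) :
    ∑ j ∈ range (d + 1), (d.choose j : ℝ) * (refinedEulerian (d + 1) k (d - j + 1) : ℝ) * c ^ j =
      (c + 1) ^ d * (eulerianBernstein d k).eval (1 / (c + 1)) := by
  rw [eulerianBernstein, eval_finsetSum, mul_sum, ← sum_range_reflect]
  refine sum_congr rfl fun j hj => ?_
  have hj : j ≤ d := mem_range_succ_iff.1 hj
  rw [eval_smul, smul_eq_mul, mul_left_comm, eval_inv_add_one_bernsteinPolynomial (by omega) hc,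
    Nat.add_sub_cancel, Nat.choose_symm hj, Nat.sub_sub_self hj]
  ring

theorem refined_eulerian_generating (d k : ℕ) (hd : 1 ≤ d) (lam : ℝ) (hlam : 0 ≤ lam) :
    ∑ j ∈ Finset.range (d + 1),
        (d.choose j : ℝ) * (refinedEulerian (d + 1) (k : ℤ) (d - j + 1) : ℝ) * lam ^ j =
      (d.factorial : ℝ) * (lam + 1) ^ d * Bspline (d + 1) ((k : ℝ) + 1 / (lam + 1)) := by
  have hpos : 0 < lam + 1 := by linarith
  have ht₁ : 1 / (lam + 1) ≤ 1 := by rw [div_le_one hpos]; linarith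
  rw [sum_choose_refinedEulerian_mul_pow d k hpos.ne', eulerianBernstein_eq_splinePiece,
    eval_splinePiece hd k (by positivity) ht₁, Int.cast_natCast, Bspline_succ_eq_truncPowDiff]
  field_simp
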